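/- arXiv:1712.09442 — 10 statements merged into one kernel-verified Lean document; each statement's English description precedes it below -/
import Mathlib

section
/- Let P be a poset of infinite cardinality κ. If the order of P is the intersection of fewer than cf(κ) Jónsson orders on the same underlying set, then P is Jónsson. -/
open Cardinal

/-- A relation `r` on `α` is Jónsson if `α` is infinite and every proper
initial segment (downward-closed set w.r.t. `r`) has cardinality `< #α`. -/
def JonssonRel {α : Type*} (r : α → α → Prop) : Prop :=
  Infinite α ∧ ∀ A : Set α, (∀ x ∈ A, ∀ y, r y x → y ∈ A) →
    A ≠ Set.univ → #A < #α

universe u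

/-! If `b ∉ A` for an initial segment `A` of `⋂ᵢ rᵢ`, every `a ∈ A` fails `rᵢ b a` for some `i`,
so `A ⊆ ⋃ᵢ {a | ¬ rᵢ b a}`. Each `{a | ¬ rᵢ b a}` is a proper initial segment of the Jónsson
preorder `rᵢ`, hence small, and a union of fewer than `cf #α` small sets is small. -/

theorem Cardinal.mk_iUnion_lt_of_lt_cof {α ι : Type u} {s : ι → Set α} {c : Cardinal.{u}}
    (hc : ℵ₀ ≤ c) (hι : #ι < c.ord.cof) (hs : ∀ i, #(s i) < c) : #(⋃ i, s i) < c :=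
  (mk_iUnion_le s).trans_lt <|
    mul_lt_of_lt hc (hι.trans_le (Ordinal.cof_ord_le c)) (iSup_lt_of_lt_cof_ord hι hs)

theorem JonssonRel.mk_setOf_not_rel_lt {α : Type u} {r : α → α → Prop} [IsPreorder α r]
    (h : JonssonRel r) (b : α) : #{a | ¬ r b a} < #α := by
  refine h.2 _ (fun a hba y hya hby => hba (_root_.trans hby hya)) ?_
  exact (Set.ne_univ_iff_exists_notMem _).2 ⟨b, fun hbb => hbb (refl b)⟩

theorem jonssonRel_iInf_of_lt_cof {α ι : Type u} [Infinite α] {r : ι → α → α → Prop}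
    [∀ i, IsPreorder α (r i)] (hj : ∀ i, JonssonRel (r i)) (hι : #ι < (#α).ord.cof) :
    JonssonRel (fun x y => ∀ i, r i x y) := by
  refine ⟨‹_›, fun A hA hA_ne => ?_⟩
  obtain ⟨b, hb⟩ := (Set.ne_univ_iff_exists_notMem A).1 hA_ne
  have hA_sub : A ⊆ ⋃ i, {a | ¬ r i b a} := fun a ha => by
    simpa using mt (hA a ha b) hb
  exact (mk_le_mk_of_subset hA_sub).trans_lt <|
    mk_iUnion_lt_of_lt_cof (aleph0_le_mk α) hι fun i => (hj i).mk_setOf_not_rel_lt b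

theorem stmt4 {α : Type u} [PartialOrder α] [Infinite α]
    {ι : Type u} (r : ι → α → α → Prop)
    (hpo : ∀ i, IsPartialOrder α (r i))
    (hj : ∀ i, JonssonRel (r i))
    (hcard : #ι < (#α).ord.cof)
    (hinter : ∀ x y : α, x ≤ y ↔ ∀ i, r i x y) :
    JonssonRel (fun x y : α => x ≤ y) := by
  have : ∀ i, IsPreorder α (r i) := fun i => (hpo i).toIsPreorder
  have hle : (fun x y : α => x ≤ y) = fun x y => ∀ i, r i x y := by
    ext x y
    exact hinter x y
  rw [hle]
  exact jonssonRel_iInf_of_lt_cof hj hcard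
end

section
/- Every well-quasi-ordered poset of infinite cardinality contains an initial segment of the same cardinality which is Jónsson. -/
open Cardinal

/-- In a well-founded poset with no infinite antichain, every sequence has a good pair. -/
lemma key_wqo {α : Type*} [PartialOrder α]
    (hwf : WellFoundedLT α)
    (hantichain : ∀ A : Set α, A.Infinite →
      ∃ x ∈ A, ∃ y ∈ A, x ≠ y ∧ (x ≤ y ∨ y ≤ x))
    (f : ℕ → α) : ∃ m n, m < n ∧ f m ≤ f n := by
  by_contra hbad
  push_neg at hbad
  -- hbad : ∀ m n, m < n → ¬ f m ≤ f n
  set B : Set ℕ := {n | ∀ m, n < m → ¬ f m < f n} with hB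
  by_cases hBinf : B.Infinite
  · -- f '' B is an infinite antichain
    have hinj : Set.InjOn f B := by
      intro a ha b hb hab
      by_contra hne
      rcases lt_or_gt_of_ne hne with h | h
      · exact hbad a b h (le_of_eq hab)
      · exact hbad b a h (le_of_eq hab.symm)
    have himg : (f '' B).Infinite := hBinf.image hinj
    obtain ⟨x, hx, y, hy, hxy, hcomp⟩ := hantichain (f '' B) himg
    obtain ⟨a, ha, rfl⟩ := hx
    obtain ⟨b, hb, rfl⟩ := hy
    have hab : a ≠ b := fun h => hxy (by rw [h])
    rcases lt_or_gt_of_ne hab with h | h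
    · rcases hcomp with hc | hc
      · exact hbad a b h hc
      · exact ha b h (lt_of_le_of_ne hc hxy.symm)
    · rcases hcomp with hc | hc
      · exact hb a h (lt_of_le_of_ne hc hxy)
      · exact hbad b a h hc
  · -- B finite: build a strictly decreasing sequence
    rw [Set.not_infinite] at hBinf
    obtain ⟨N, hN⟩ : ∃ N, ∀ n, N ≤ n → n ∉ B := by
      rcases hBinf.bddAbove with ⟨N, hNb⟩
      exact ⟨N + 1, fun n hn hnB => by
        have := hNb hnB; omega⟩
    -- for every n ≥ N there is m > n with f m < f n
    have hstep : ∀ n, N ≤ n → ∃ m, n < m ∧ f m < f n := by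
      intro n hn
      have := hN n hn
      simp only [hB, Set.mem_setOf_eq, not_forall, not_not] at this
      obtain ⟨m, hm1, hm2⟩ := this
      exact ⟨m, hm1, hm2⟩
    choose nxt hnxt1 hnxt2 using hstep
    let g : ℕ → {n : ℕ // N ≤ n} := fun k =>
      Nat.rec ⟨N, le_refl N⟩ (fun _ p => ⟨nxt p.1 p.2, le_of_lt (lt_of_le_of_lt p.2 (hnxt1 p.1 p.2))⟩) k
    have hdec : ∀ k, f ((g (k+1)).1) < f ((g k).1) := fun k => hnxt2 _ _
    -- contradiction with well-foundedness
    have : ∀ x ∈ Set.range (fun k => f ((g k).1)), ∃ y ∈ Set.range (fun k => f ((g k).1)), y < x := by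
      rintro x ⟨k, rfl⟩
      exact ⟨f ((g (k+1)).1), ⟨k+1, rfl⟩, hdec k⟩
    obtain ⟨x, hx, hmin⟩ := hwf.wf.has_min (Set.range (fun k => f ((g k).1))) ⟨f ((g 0).1), 0, rfl⟩
    obtain ⟨y, hy, hylt⟩ := this x hx
    exact hmin y hy hylt

theorem stmt5 {α : Type*} [PartialOrder α] [Infinite α]
    (hwf : WellFoundedLT α)
    (hantichain : ∀ A : Set α, A.Infinite →
      ∃ x ∈ A, ∃ y ∈ A, x ≠ y ∧ (x ≤ y ∨ y ≤ x)) :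
    ∃ A : Set α, IsLowerSet A ∧ #A = #α ∧
      JonssonRel (fun x y : A => (x : α) ≤ (y : α)) := by
  set S : Set (Set α) := {A | IsLowerSet A ∧ #A = #α} with hS
  have hSne : (Set.univ : Set α) ∈ S := ⟨isLowerSet_univ, mk_univ⟩
  -- there is a minimal element of S under strict inclusion
  have hmin : ∃ A ∈ S, ∀ B ∈ S, ¬ B ⊂ A := by
    by_contra hno
    push_neg at hno
    -- build a strictly decreasing chain of elements of S
    have hstep : ∀ A : Set α, A ∈ S → ∃ B, B ∈ S ∧ B ⊂ A := by
      intro A hA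
      obtain ⟨B, hB, hBA⟩ := hno A hA
      exact ⟨B, hB, hBA⟩
    choose nxt hnxt1 hnxt2 using hstep
    let c : ℕ → {A : Set α // A ∈ S} := fun k =>
      Nat.rec ⟨Set.univ, hSne⟩ (fun _ p => ⟨nxt p.1 p.2, hnxt1 p.1 p.2⟩) k
    have hc : ∀ k, (c (k+1)).1 ⊂ (c k).1 := fun k => hnxt2 _ _
    -- pick witnesses
    have hw : ∀ k, ∃ x, x ∈ (c k).1 ∧ x ∉ (c (k+1)).1 := by
      intro k
      obtain ⟨hsub, hne⟩ := hc k
      rcases Set.not_subset.mp hne with ⟨x, hx1, hx2⟩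
      exact ⟨x, hx1, hx2⟩
    choose x hx1 hx2 using hw
    -- monotone: c n ⊆ c (m+1) for m < n
    have hmono : ∀ m n, m + 1 ≤ n → (c n).1 ⊆ (c (m+1)).1 := by
      intro m n h
      induction n with
      | zero => omega
      | succ k ih =>
        rcases Nat.lt_or_ge (m+1) (k+1) with h' | h'
        · exact subset_trans (hc k).1 (ih (by omega))
        · have : m + 1 = k + 1 := by omega
          rw [this]
    obtain ⟨m, n, hmn, hle⟩ := key_wqo hwf hantichain x
    -- x n ∈ c n ⊆ c (m+1), lower set, x m ≤ x n gives x m ∈ c (m+1), contradiction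
    have hxn : x n ∈ (c (m+1)).1 := hmono m n hmn (hx1 n)
    have hlower : IsLowerSet (c (m+1)).1 := (c (m+1)).2.1
    exact hx2 m (hlower hle hxn)
  obtain ⟨A, ⟨hAlower, hAcard⟩, hAmin⟩ := hmin
  refine ⟨A, hAlower, hAcard, ?_, ?_⟩
  · rw [← Cardinal.aleph0_le_mk_iff, hAcard]
    exact Cardinal.aleph0_le_mk α
  · intro B hBlow hBne
    set C : Set α := Subtype.val '' B with hC
    have hCcard : #C = #B := Cardinal.mk_image_eq Subtype.val_injective
    have hClower : IsLowerSet C := by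
      rintro xv yv hle ⟨b, hb, rfl⟩
      have hyA : yv ∈ A := hAlower hle b.2
      exact ⟨⟨yv, hyA⟩, hBlow b hb ⟨yv, hyA⟩ hle, rfl⟩
    have hCA : C ⊂ A := by
      constructor
      · rintro xv ⟨b, _, rfl⟩; exact b.2
      · intro hsub
        apply hBne
        ext a
        simp only [Set.mem_univ, iff_true]
        obtain ⟨b, hb, hba⟩ := hsub a.2
        have : b = a := Subtype.ext hba
        rwa [this] at hb
    have hCne : #C ≠ #α := fun h => hAmin C ⟨hClower, h⟩ hCA
    have hCle : #C ≤ #α := by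
      calc #C ≤ #A := Cardinal.mk_le_mk_of_subset hCA.1
        _ = #α := hAcard
    rw [hAcard, ← hCcard]
    exact lt_of_le_of_ne hCle hCne
end

section
/- An infinite poset P is Jónsson if and only if there exists a cofinal subset C of P such that |P \ ↑x| < |P| for every x ∈ C. -/
open Cardinal

theorem stmt7 {α : Type*} [PartialOrder α] [Infinite α] :
    JonssonRel (fun x y : α => x ≤ y) ↔
      ∃ C : Set α, (∀ x : α, ∃ y ∈ C, x ≤ y) ∧
        ∀ x ∈ C, #{y : α | ¬ x ≤ y} < #α := by
  constructor
  · rintro ⟨_, hJ⟩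
    refine ⟨Set.univ, fun x => ⟨x, Set.mem_univ x, le_refl x⟩, fun x _ => ?_⟩
    apply hJ
    · intro a ha y hy hxa
      exact ha (le_trans hxa hy)
    · intro h
      have : x ∈ {y : α | ¬ x ≤ y} := h ▸ Set.mem_univ x
      exact this (le_refl x)
  · rintro ⟨C, hcof, hsmall⟩
    refine ⟨inferInstance, fun A hdc hne => ?_⟩
    obtain ⟨a, ha⟩ : ∃ a, a ∉ A := by
      by_contra h
      push_neg at h
      exact hne (Set.eq_univ_of_forall h)
    obtain ⟨y, hyC, hay⟩ := hcof a
    have hyA : y ∉ A := fun hy => ha (hdc y hy a hay)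
    have hsub : A ⊆ {z : α | ¬ y ≤ z} := fun z hz hyz => hyA (hdc z hz y hyz)
    exact lt_of_le_of_lt (Cardinal.mk_le_mk_of_subset hsub) (hsmall y hyC)
end

section
/- If P is a Jónsson poset of cardinality κ, then every subset A of P of cardinality strictly less than cf(κ) has an upper bound in P. -/
open Cardinal

/-! If `A` had no upper bound, the complements of the cones `Ici a`, `a ∈ A`, would cover `P`.
Each of them is a proper initial segment, hence of size `< κ`, and fewer than `cf κ` sets of
size `< κ` cannot cover a set of size `κ`. -/

universe u

theorem Cardinal.iUnion_ne_univ_of_lt_cof {α ι : Type u} [Infinite α] {s : ι → Set α}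
    (hι : #ι < (#α).ord.cof) (hs : ∀ i, #(s i) < #α) : ⋃ i, s i ≠ Set.univ := by
  intro hcover
  apply lt_irrefl #α
  calc #α = #(⋃ i, s i) := by rw [hcover, mk_univ]
    _ ≤ sum fun i => #(s i) := mk_iUnion_le_sum_mk
    _ ≤ #ι * ⨆ i, #(s i) := sum_le_mk_mul_iSup _
    _ < #α := mul_lt_of_lt (aleph0_le_mk α) (hι.trans_le (Ordinal.cof_ord_le _))
      (iSup_lt_of_lt_cof_ord hι hs)

theorem JonssonRel.mk_compl_Ici_lt {α : Type*} [Preorder α]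
    (h : JonssonRel (fun x y : α => x ≤ y)) (a : α) : #((Set.Ici a)ᶜ : Set α) < #α := by
  refine h.2 _ (fun x hx y hyx hay => hx (hay.trans hyx)) fun huniv => ?_
  exact (huniv ▸ Set.mem_univ a : a ∈ (Set.Ici a)ᶜ) le_rfl

theorem stmt8 {α : Type*} [PartialOrder α]
    (h : JonssonRel (fun x y : α => x ≤ y))
    (A : Set α) (hA : #A < (#α).ord.cof) :
    ∃ z : α, ∀ a ∈ A, a ≤ z := by
  have := h.1
  by_contra! hunbounded
  refine iUnion_ne_univ_of_lt_cof hA (fun a : A => h.mk_compl_Ici_lt a) ?_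
  refine Set.eq_univ_of_forall fun z => ?_
  obtain ⟨a, ha, haz⟩ := hunbounded z
  exact Set.mem_iUnion.2 ⟨⟨a, ha⟩, haz⟩
end

section
/- Let P be a poset and Q a proper initial segment of P. Then P is Jónsson if and only if: P \ Q is Jónsson, |Q| < |P|, and every element of Q is below some element of P \ Q. -/
open Cardinal

theorem stmt11 {α : Type*} [PartialOrder α]
    (Q : Set α) (hQ : IsLowerSet Q) (hproper : Q ≠ Set.univ) :
    JonssonRel (fun x y : α => x ≤ y) ↔
      (JonssonRel (fun x y : (Set.univ \ Q : Set α) => (x : α) ≤ (y : α)) ∧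
        #Q < #α ∧ ∀ q ∈ Q, ∃ x ∉ Q, q ≤ x) := by
  set C : Set α := Set.univ \ Q with hC
  have hmemC : ∀ x : α, x ∈ C ↔ x ∉ Q := by intro x; simp [hC]
  have hCcompl : C = Qᶜ := by rw [hC]; ext x; simp
  constructor
  · rintro ⟨hinf, hseg⟩
    have haleph : ℵ₀ ≤ #α := Cardinal.infinite_iff.1 hinf
    have hQlt : #Q < #α := hseg Q (fun x hx y hyx => hQ hyx hx) hproper
    have hCeq : #C = #α := by
      have h1 : #C ≤ #α := mk_set_le C
      rcases lt_or_eq_of_le h1 with h2 | h2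
      · exfalso
        have h3 : #Q + #C = #α := by rw [hCcompl]; exact mk_sum_compl Q
        have := Cardinal.add_lt_of_lt haleph hQlt h2
        rw [h3] at this
        exact lt_irrefl _ this
      · exact h2
    refine ⟨⟨?_, ?_⟩, hQlt, ?_⟩
    · rw [Cardinal.infinite_iff, hCeq, ← Cardinal.infinite_iff]; exact hinf
    · intro A hA hAne
      set B : Set α := Q ∪ (Subtype.val '' A) with hB
      have hBseg : ∀ x ∈ B, ∀ y, y ≤ x → y ∈ B := by
        rintro x (hx | ⟨⟨x', hx'⟩, hxA, rfl⟩) y hyx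
        · exact Or.inl (hQ hyx hx)
        · by_cases hyQ : y ∈ Q
          · exact Or.inl hyQ
          · exact Or.inr ⟨⟨y, (hmemC y).2 hyQ⟩, hA _ hxA _ hyx, rfl⟩
      have hBne : B ≠ Set.univ := by
        intro h
        obtain ⟨c, hcA⟩ : ∃ c : ↥C, c ∉ A := by
          by_contra hcon
          push_neg at hcon
          exact hAne (Set.eq_univ_of_forall hcon)
        have hcB : (c : α) ∈ B := h ▸ Set.mem_univ _
        rcases hcB with hcQ | ⟨a, haA, hav⟩
        · exact ((hmemC c).1 c.2) hcQ
        · exact hcA (by rwa [Subtype.val_injective hav] at haA)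
      have hBlt : #B < #α := hseg B hBseg hBne
      have : #A = #(Subtype.val '' A : Set α) :=
        (Cardinal.mk_image_eq Subtype.val_injective).symm
      rw [hCeq, this]
      exact lt_of_le_of_lt (Cardinal.mk_le_mk_of_subset Set.subset_union_right) hBlt
    · intro q hq
      by_contra hcon
      push_neg at hcon
      set A : Set α := {y | ¬ q ≤ y} with hA
      have hAseg : ∀ x ∈ A, ∀ y, y ≤ x → y ∈ A := by
        intro x hx y hyx hqy
        exact hx (le_trans hqy hyx)
      have hAne : A ≠ Set.univ := by
        intro h
        have : q ∈ A := h ▸ Set.mem_univ q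
        exact this (le_refl q)
      have hAlt : #A < #α := hseg A hAseg hAne
      have hD : {y | q ≤ y} ⊆ Q := by
        intro y hy
        by_contra hyQ
        exact (hcon y hyQ) hy
      have hDlt : #{y | q ≤ y} < #α :=
        lt_of_le_of_lt (Cardinal.mk_le_mk_of_subset hD) hQlt
      have hcover : A ∪ {y | q ≤ y} = Set.univ := by
        apply Set.eq_univ_of_forall
        intro y
        by_cases h : q ≤ y
        · exact Or.inr h
        · exact Or.inl h
      have : #α ≤ #(A ∪ {y | q ≤ y} : Set α) := by
        rw [hcover, Cardinal.mk_univ]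
      have := lt_of_le_of_lt (this.trans (Cardinal.mk_union_le _ _))
        (Cardinal.add_lt_of_lt haleph hAlt hDlt)
      exact lt_irrefl _ this
  · rintro ⟨⟨hCinf, hCseg⟩, hQlt, hcof⟩
    have hCaleph : ℵ₀ ≤ #C := Cardinal.infinite_iff.1 hCinf
    have haleph : ℵ₀ ≤ #α := hCaleph.trans (mk_set_le C)
    refine ⟨Cardinal.infinite_iff.2 haleph, ?_⟩
    intro A hA hAne
    set A' : Set ↥C := {x | (x : α) ∈ A} with hA'
    have hA'seg : ∀ x ∈ A', ∀ y : ↥C, (y : α) ≤ (x : α) → y ∈ A' :=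
      fun x hx y hyx => hA _ hx _ hyx
    have hA'ne : A' ≠ Set.univ := by
      intro h
      apply hAne
      apply Set.eq_univ_of_forall
      intro y
      by_cases hyQ : y ∈ Q
      · obtain ⟨x, hxQ, hyx⟩ := hcof y hyQ
        have hxA : (⟨x, (hmemC x).2 hxQ⟩ : ↥C) ∈ A' := by rw [h]; trivial
        exact hA _ hxA _ hyx
      · have : (⟨y, (hmemC y).2 hyQ⟩ : ↥C) ∈ A' := by rw [h]; trivial
        exact this
    have hA'lt : #A' < #α := lt_of_lt_of_le (hCseg A' hA'seg hA'ne) (mk_set_le C)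
    have hsub : A ⊆ Q ∪ (Subtype.val '' A') := by
      intro x hx
      by_cases hxQ : x ∈ Q
      · exact Or.inl hxQ
      · exact Or.inr ⟨⟨x, (hmemC x).2 hxQ⟩, hx, rfl⟩
    have h1 : #A ≤ #Q + #(Subtype.val '' A' : Set α) :=
      (Cardinal.mk_le_mk_of_subset hsub).trans (Cardinal.mk_union_le _ _)
    rw [Cardinal.mk_image_eq Subtype.val_injective] at h1
    exact lt_of_le_of_lt h1 (Cardinal.add_lt_of_lt haleph hQlt hA'lt)
end

section
/- If a poset P is an extension of a pure poset Q on the same underlying set (the order of P contains the order of Q), then P is pure. -/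
open Cardinal

/-- A relation is pure if every proper initial segment is strictly bounded above. -/
def PureRel {α : Type*} (r : α → α → Prop) : Prop :=
  ∀ I : Set α, (∀ x ∈ I, ∀ y, r y x → y ∈ I) → I ≠ Set.univ →
    ∃ x ∉ I, ∀ y ∈ I, r y x

theorem stmt12 {α : Type*} [PartialOrder α] (r : α → α → Prop)
    [IsPartialOrder α r] (hext : ∀ x y : α, r x y → x ≤ y)
    (hpure : PureRel r) :
    PureRel (fun x y : α => x ≤ y) := by
  intro I hdc hne
  obtain ⟨x, hx, hb⟩ := hpure I (fun a ha y hy => hdc a ha y (hext y a hy)) hne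
  exact ⟨x, hx, fun y hy => hext y x (hb y hy)⟩
end

section
/- A pure poset P is Jónsson if and only if P is infinite and |↓x| < |P| for every x ∈ P. -/
open Cardinal

theorem stmt14 {α : Type*} [PartialOrder α]
    (hpure : PureRel (fun x y : α => x ≤ y)) :
    JonssonRel (fun x y : α => x ≤ y) ↔
      (Infinite α ∧ ∀ x : α, #{y : α | y ≤ x} < #α) := by
  constructor
  · rintro ⟨hinf, hJ⟩
    refine ⟨hinf, fun x => ?_⟩
    by_cases htop : {y : α | y ≤ x} = Set.univ
    · -- x is a top element; then univ \ {x} is a proper initial segment of full size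
      exfalso
      have hdc : ∀ a ∈ ({x}ᶜ : Set α), ∀ y, y ≤ a → y ∈ ({x}ᶜ : Set α) := by
        intro a ha y hya
        intro hy
        apply ha
        have hxa : x ≤ a := hy ▸ hya
        have hax : a ≤ x := by
          have := Set.eq_univ_iff_forall.mp htop a
          exact this
        exact (le_antisymm hax hxa).symm ▸ rfl
      have hne : ({x}ᶜ : Set α) ≠ Set.univ := by
        intro h
        have : x ∈ ({x}ᶜ : Set α) := h ▸ Set.mem_univ x
        exact this rfl
      have hlt := hJ _ hdc hne
      have hs : #({x} : Set α) < #α := by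
        simp only [Cardinal.mk_singleton]
        exact lt_of_lt_of_le one_lt_aleph0 (Cardinal.infinite_iff.mp hinf)
      rw [Cardinal.mk_compl_of_infinite _ hs] at hlt
      exact lt_irrefl _ hlt
    · exact hJ _ (fun a ha y hya => le_trans hya ha) htop
  · rintro ⟨hinf, hx⟩
    refine ⟨hinf, fun A hdc hne => ?_⟩
    obtain ⟨b, hbA, hb⟩ := hpure A hdc hne
    calc #A ≤ #{y : α | y ≤ b} := Cardinal.mk_le_mk_of_subset (fun y hy => hb y hy)
    _ < #α := hx b
end

section
/- Let P be a poset whose cardinality is an infinite regular cardinal κ. Then P is Jónsson if and only if P is pure and |↓x| < κ for every x ∈ P. -/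
open Cardinal

theorem stmt15 {α : Type*} [PartialOrder α] [Infinite α]
    (hreg : (#α).IsRegular) :
    JonssonRel (fun x y : α => x ≤ y) ↔
      (PureRel (fun x y : α => x ≤ y) ∧ ∀ x : α, #{y : α | y ≤ x} < #α) := by
  constructor
  · rintro ⟨-, hJ⟩
    have hdown : ∀ x : α, #{y : α | y ≤ x} < #α := by
      intro x
      have h1 : #{y : α | y < x} < #α := by
        apply hJ
        · intro a ha y hy; exact lt_of_le_of_lt hy ha
        · intro h
          have hx : x ∈ {y : α | y < x} := h ▸ Set.mem_univ x
          exact lt_irrefl x hx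
      have h2 : {y : α | y ≤ x} ⊆ insert x {y : α | y < x} := by
        intro y hy
        rcases lt_or_eq_of_le hy with h | h
        · exact Set.mem_insert_of_mem _ h
        · exact h ▸ Set.mem_insert _ _
      calc #{y : α | y ≤ x} ≤ #(insert x {y : α | y < x} : Set α) :=
            Cardinal.mk_le_mk_of_subset h2
        _ ≤ #{y : α | y < x} + 1 := Cardinal.mk_insert_le
        _ < #α := Cardinal.add_lt_of_lt hreg.aleph0_le h1
            (lt_of_lt_of_le one_lt_aleph0 hreg.aleph0_le)
    refine ⟨?_, hdown⟩
    intro I hI hIne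
    set U : Set α := {x | ∀ y ∈ I, y ≤ x} with hU
    have hcover : Uᶜ ⊆ ⋃ y : I, {x | ¬ (y : α) ≤ x} := by
      intro x hx
      simp only [hU, Set.mem_compl_iff, Set.mem_setOf_eq, not_forall] at hx
      obtain ⟨y, hyI, hyx⟩ := hx
      exact Set.mem_iUnion.2 ⟨⟨y, hyI⟩, hyx⟩
    have hIlt : #I < #α := hJ I hI hIne
    have hC : ∀ y : I, #{x | ¬ (y : α) ≤ x} < #α := by
      intro y
      apply hJ
      · intro a ha z hz
        exact fun h => ha (h.trans hz)
      · intro h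
        have : (y : α) ∈ {x | ¬ (y : α) ≤ x} := h ▸ Set.mem_univ _
        exact this le_rfl
    have hcompl : #(Uᶜ : Set α) < #α := by
      calc #(Uᶜ : Set α) ≤ #(⋃ y : I, {x | ¬ (y : α) ≤ x}) :=
            Cardinal.mk_le_mk_of_subset hcover
        _ ≤ Cardinal.sum (fun y : I => #{x | ¬ (y : α) ≤ x}) :=
            Cardinal.mk_iUnion_le_sum_mk
        _ < #α := Cardinal.sum_lt_of_isRegular hreg hIlt hC
    have hUnion : #(I ∪ Uᶜ : Set α) < #α :=
      lt_of_le_of_lt (Cardinal.mk_union_le _ _)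
        (Cardinal.add_lt_of_lt hreg.aleph0_le hIlt hcompl)
    have hne : (I ∪ Uᶜ : Set α) ≠ Set.univ := by
      intro h
      rw [h, Cardinal.mk_univ] at hUnion
      exact lt_irrefl _ hUnion
    obtain ⟨x, hx⟩ := Set.ne_univ_iff_exists_notMem _ |>.1 hne
    rw [Set.mem_union, not_or] at hx
    exact ⟨x, hx.1, fun y hy => (Set.notMem_compl_iff.1 hx.2) y hy⟩
  · rintro ⟨hpure, hdown⟩
    refine ⟨‹Infinite α›, ?_⟩
    intro A hA hAne
    obtain ⟨x, hxA, hxub⟩ := hpure A hA hAne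
    have hsub : A ⊆ {y | y ≤ x} := fun y hy => hxub y hy
    exact lt_of_le_of_lt (Cardinal.mk_le_mk_of_subset hsub) (hdown x)
end

section
/- Every semiorder with no maximal element is pure: for every x in a semiorder Q with no maximal element, there exists y ∈ Q such that every element of Q \ ↑x is ≤ y. -/
open Cardinal

/-- x and y are incomparable. -/
def Incomp {α : Type*} [Preorder α] (x y : α) : Prop := ¬ x ≤ y ∧ ¬ y ≤ x

/-- A semiorder is a poset embedding neither 2 ⊕ 2 nor 3 ⊕ 1. -/
def IsSemiorder (α : Type*) [PartialOrder α] : Prop :=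
  (¬ ∃ a b c d : α, a < b ∧ c < d ∧ Incomp a c ∧ Incomp a d ∧
      Incomp b c ∧ Incomp b d) ∧
  (¬ ∃ a b c d : α, a < b ∧ b < c ∧ Incomp a d ∧ Incomp b d ∧ Incomp c d)

theorem stmt16 {α : Type*} [PartialOrder α]
    (hsemi : IsSemiorder α) (hnomax : ∀ x : α, ∃ y : α, x < y) :
    ∀ x : α, ∃ y : α, ∀ z : α, ¬ x ≤ z → z ≤ y := by
  intro x
  obtain ⟨b, hxb⟩ := hnomax x
  obtain ⟨c, hbc⟩ := hnomax b
  refine ⟨c, fun z hxz => ?_⟩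
  by_contra hzc
  exact hsemi.2 ⟨x, b, c, z, hxb, hbc,
    ⟨hxz, fun h => hzc (h.trans (hxb.le.trans hbc.le))⟩,
    ⟨fun h => hxz (hxb.le.trans h), fun h => hzc (h.trans hbc.le)⟩,
    ⟨fun h => hxz (hxb.le.trans (hbc.le.trans h)), hzc⟩⟩
end

section
/- A semiorder Q is Jónsson if and only if Q has no maximal element and the order of Q has an extension to a linear order on Q which is Jónsson. -/
open Cardinal

theorem stmt17 {α : Type*} [PartialOrder α] (hsemi : IsSemiorder α) :
    JonssonRel (fun x y : α => x ≤ y) ↔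
      ((∀ x : α, ∃ y : α, x < y) ∧
        ∃ r : α → α → Prop, IsLinearOrder α r ∧
          (∀ x y : α, x ≤ y → r x y) ∧ JonssonRel r) := by
  constructor
  · rintro ⟨hinf, hJ⟩
    haveI := hinf
    constructor
    · -- no maximal element
      intro x
      by_contra hmax
      push_neg at hmax
      have hA : #({x}ᶜ : Set α) < #α := by
        apply hJ
        · rintro y hy w hwy
          intro hw
          rcases hw with rfl
          exact hmax y (lt_of_le_of_ne hwy fun h => hy h.symm)
        · intro h
          have : x ∈ ({x}ᶜ : Set α) := h ▸ Set.mem_univ x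
          exact this rfl
      have h1 : #({x} : Set α) < #α := by
        simpa using (Cardinal.one_lt_aleph0.trans_le (Cardinal.aleph0_le_mk α))
      rw [Cardinal.mk_compl_of_infinite _ h1] at hA
      exact lt_irrefl _ hA
    · obtain ⟨s, hlin, hle⟩ := extend_partialOrder ((· ≤ ·) : α → α → Prop)
      refine ⟨s, hlin, fun x y h => hle x y h, hinf, ?_⟩
      intro A hdown hne
      exact hJ A (fun x hx y hyx => hdown x hx y (hle y x hyx)) hne
  · rintro ⟨hnomax, r, hlin, hext, hinf, hJ⟩
    haveI := hinf
    haveI : IsLinearOrder α r := hlin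
    refine ⟨hinf, ?_⟩
    intro A hdown hne
    obtain ⟨z, hz⟩ : ∃ z, z ∉ A := by
      by_contra h
      push_neg at h
      exact hne (Set.eq_univ_of_forall h)
    obtain ⟨z₁, hz1⟩ := hnomax z
    obtain ⟨z₂, hz2⟩ := hnomax z₁
    -- every element of A is ≤ z₂
    have key : ∀ a ∈ A, a ≤ z₂ := by
      intro a ha
      have h0 : ¬ z ≤ a := fun h => hz (hdown a ha z h)
      by_contra hcon
      have h2 : ¬ z₂ ≤ a := fun h => h0 ((hz1.le.trans hz2.le).trans h)
      have h1 : ¬ z₁ ≤ a := fun h => h0 (hz1.le.trans h)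
      have ha1 : ¬ a ≤ z₁ := fun h => hcon (h.trans hz2.le)
      have ha0 : ¬ a ≤ z := fun h => hcon (h.trans (hz1.le.trans hz2.le))
      exact hsemi.2 ⟨z, z₁, z₂, a, hz1, hz2, ⟨h0, ha0⟩, ⟨h1, ha1⟩, ⟨h2, hcon⟩⟩
    have hz2A : z₂ ∉ A := fun h => hz (hdown z₂ h z (hz1.le.trans hz2.le))
    set B : Set α := {y | r y z₂ ∧ y ≠ z₂} with hB
    have hAB : A ⊆ B := by
      intro a ha
      exact ⟨hext a z₂ (key a ha), fun h => hz2A (h ▸ ha)⟩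
    have hBlt : #B < #α := by
      apply hJ
      · rintro y ⟨hy1, hy2⟩ w hwy
        refine ⟨Trans.trans hwy hy1, ?_⟩
        rintro rfl
        exact hy2 (antisymm hy1 hwy)
      · intro h
        have : z₂ ∈ B := h ▸ Set.mem_univ z₂
        exact this.2 rfl
    exact lt_of_le_of_lt (Cardinal.mk_le_mk_of_subset hAB) hBlt
end
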